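/- arXiv:1309.0437 — 9 statements merged into one kernel-verified Lean document; each statement's English description precedes it below -/
import Mathlib

section
/- In the completed Heisenberg algebra ℂ[[t,q,p]] with the Moyal normal-order star product, the star product of 1/(1-p) and 1/(1-q) equals (1/((1-p)(1-q)))·E(t/((1-p)(1-q))), where E(t) = Σ_{n≥0} n!·t^n is the Euler series. In particular this series in t is divergent for any fixed q, p with (1-p)(1-q) ≠ 0. -/
open Finset

/-- Coefficient functions: `f i j k` is the coefficient of `q^i p^j t^k`.
The Moyal normal-order star product `f ⋆ g` in coefficient form. -/
noncomputable def star (f g : ℕ → ℕ → ℕ → ℂ) : ℕ → ℕ → ℕ → ℂ := fun i j l =>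
  ∑ k ∈ range (l + 1), ∑ n ∈ range (l - k + 1), ∑ i1 ∈ range (i + 1), ∑ j1 ∈ range (j + 1),
    (1 / (k.factorial : ℂ)) *
      (((j1 + k).factorial : ℂ) / (j1.factorial : ℂ)) * f i1 (j1 + k) n *
      ((((i - i1) + k).factorial : ℂ) / ((i - i1).factorial : ℂ)) * g ((i - i1) + k) (j - j1) (l - k - n)

/-- `1/(1-p) = Σ_j p^j` -/
def geomP : ℕ → ℕ → ℕ → ℂ := fun i _ k => if i = 0 ∧ k = 0 then 1 else 0

/-- `1/(1-q) = Σ_i q^i` -/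
def geomQ : ℕ → ℕ → ℕ → ℂ := fun _ j k => if j = 0 ∧ k = 0 then 1 else 0

/-!
Only one term of the defining sum of `star geomP geomQ` survives: `geomP` forces the `q`-degree
and `t`-degree of the left factor to vanish and `geomQ` forces the `p`-degree and `t`-degree of
the right factor to vanish, so everything comes from the `l`-th derivative term, whose
coefficient `(1/l!) · (j+l)!/j! · (i+l)!/i!` equals `l! C(i+l,l) C(j+l,l)`. Summing this over
`i, j` at `q = a`, `p = b` gives `Σ l! x^l / c` with `c = (1-a)(1-b)`, `x = t/c`, whose
consecutive terms grow by the ratio `(l+1)|x| → ∞`.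
-/

open Filter Nat

theorem Nat.cast_add_factorial_div_factorial (K : Type*) [Field K] [CharZero K] (n k : ℕ) :
    ((n + k)! / n ! : K) = k ! * (n + k).choose k := by
  rw [Nat.cast_choose K (Nat.le_add_left k n), Nat.add_sub_cancel]
  field_simp
  exact (mul_div_mul_right _ _ (cast_ne_zero.2 (factorial_ne_zero k))).symm

theorem not_summable_factorial_mul_pow {𝕜 : Type*} [RCLike 𝕜] {x : 𝕜} (hx : x ≠ 0) :
    ¬ Summable (fun k : ℕ => (k ! : 𝕜) * x ^ k) := by
  have hx_pos : 0 < ‖x‖ := norm_pos_iff.2 hx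
  obtain ⟨N, hN⟩ := exists_nat_ge (2 / ‖x‖)
  refine not_summable_of_ratio_norm_eventually_ge one_lt_two
    (Frequently.of_forall fun k => ?_) (eventually_atTop.2 ⟨N, fun k hk => ?_⟩)
  · simp [factorial_ne_zero, hx]
  · have h_ratio : 2 ≤ (k + 1 : ℝ) * ‖x‖ := by
      rw [div_le_iff₀ hx_pos] at hN
      nlinarith [(Nat.cast_le (α := ℝ)).2 hk]
    calc 2 * ‖(k ! : 𝕜) * x ^ k‖ ≤ (k + 1 : ℝ) * ‖x‖ * ‖(k ! : 𝕜) * x ^ k‖ := by gcongr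
      _ = ‖((k + 1)! : 𝕜) * x ^ (k + 1)‖ := by
        simp only [norm_mul, norm_pow, RCLike.norm_natCast, factorial_succ, cast_mul, pow_succ]
        push_cast
        ring

theorem star_geomP_geomQ_apply (i j l : ℕ) :
    star geomP geomQ i j l = 1 / (l ! : ℂ) * ((j + l)! / j !) * ((i + l)! / i !) := by
  simp only [_root_.star, geomP, geomQ, mul_ite, mul_one, mul_zero, ite_mul, zero_mul]
  rw [sum_eq_single_of_mem l (self_mem_range_succ l), sum_eq_single_of_mem 0 (by simp),
    sum_eq_single_of_mem 0 (by simp), sum_eq_single_of_mem j (self_mem_range_succ j)]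
  · simp
  · intro j1 hj1 hj1j
    rw [mem_range] at hj1
    simp [show j - j1 ≠ 0 by omega]
  · intro i1 _ hi1
    simp [hi1]
  · intro n _ hn
    simp [hn]
  · intro k hk hkl
    rw [mem_range] at hk
    refine sum_eq_zero fun n _ => ?_
    obtain rfl | hn := eq_or_ne n 0
    · simp [show l - k ≠ 0 by omega]
    · simp [hn]

/-- `1/(1-p) ⋆ 1/(1-q) = (1/((1-p)(1-q)))·E(t/((1-p)(1-q)))` where
`E(t) = Σ n! t^n`; the coefficient of `q^i p^j t^k` in the right-hand side is
`k!·C(i+k,k)·C(j+k,k)`.  In particular, for any fixed `q = a`, `p = b` with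
`(1-a)(1-b) ≠ 0`, the resulting power series in `t` diverges for every `t ≠ 0`. -/
theorem star_geomP_geomQ :
    (star geomP geomQ = fun i j k =>
      (k.factorial : ℂ) * ((i + k).choose k) * ((j + k).choose k)) ∧
    (∀ a b : ℂ, (1 - a) * (1 - b) ≠ 0 → ∀ t : ℂ, t ≠ 0 →
      ¬ Summable (fun k : ℕ =>
        (k.factorial : ℂ) * (t / ((1 - a) * (1 - b))) ^ k / ((1 - a) * (1 - b)))) := by
  constructor
  · funext i j l
    rw [star_geomP_geomQ_apply, Nat.cast_add_factorial_div_factorial,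
      Nat.cast_add_factorial_div_factorial]
    field_simp
  · intro a b hab t ht
    rw [summable_div_const_iff hab]
    exact not_summable_factorial_mul_pow (div_ne_zero ht hab)
end

section
/- In the Borel dual algebra ℂ[[ξ,q,p]] with product * obtained by conjugating the Moyal normal-order star product with the formal Borel transform t^k ↦ ξ^k/k!, one has p^n * q^m = Σ_{k≥0} C(n,k)·C(m,k)·p^{n-k} q^{m-k} ξ^k for all nonnegative integers n, m. -/
/- When neither factor involves `ξ`, the Borel weight `n! m! k!/(n+m+k)!` is `1`, so only the
`k = l` term of the `ξ^l`-coefficient survives: the Borel dual product of `ξ`-free series is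
`Σ_l ξ^l (1/l!)∂_p^l f · (1/l!)∂_q^l g`. For `p^n` and `q^m` this leaves a single term,
`C(n,l) C(m,l)`, in each coefficient of `p^{n-l} q^{m-l} ξ^l`. -/

open Finset

/-- The Borel dual product on `ℂ[[ξ,q,p]]` in coefficient form: `f i j l` is the
coefficient of `q^i p^j ξ^l`.  For `f = Σ φ_n ξ^n`, `g = Σ ψ_m ξ^m`,
`f * g = Σ_l γ_l ξ^l` with
`γ_l = Σ_{n+m+k=l} (n! m! k!/(n+m+k)!)·(1/k!)∂_p^k φ_n·(1/k!)∂_q^k ψ_m`. -/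
noncomputable def bstar (f g : ℕ → ℕ → ℕ → ℂ) : ℕ → ℕ → ℕ → ℂ := fun i j l =>
  ∑ k ∈ range (l + 1), ∑ n ∈ range (l - k + 1), ∑ i1 ∈ range (i + 1), ∑ j1 ∈ range (j + 1),
    ((n.factorial : ℂ) * ((l - k - n).factorial : ℂ) * (k.factorial : ℂ) / (l.factorial : ℂ)) *
      (((j1 + k).factorial : ℂ) / ((j1.factorial : ℂ) * (k.factorial : ℂ))) * f i1 (j1 + k) n *
      ((((i - i1) + k).factorial : ℂ) / (((i - i1).factorial : ℂ) * (k.factorial : ℂ))) *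
      g ((i - i1) + k) (j - j1) (l - k - n)

/-- the monomial `p^n` -/
def Pmon (n : ℕ) : ℕ → ℕ → ℕ → ℂ := fun i j k => if i = 0 ∧ j = n ∧ k = 0 then 1 else 0

/-- the monomial `q^m` -/
def Qmon (m : ℕ) : ℕ → ℕ → ℕ → ℂ := fun i j k => if i = m ∧ j = 0 ∧ k = 0 then 1 else 0

theorem Nat.cast_factorial_add_div (a k : ℕ) :
    ((a + k).factorial : ℂ) / (a.factorial * k.factorial) = (a + k).choose k := by
  rw [Nat.cast_choose ℂ (Nat.le_add_left k a), Nat.add_sub_cancel, mul_comm]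

theorem bstar_apply_of_xi_free {f g : ℕ → ℕ → ℕ → ℂ}
    (hf : ∀ i j n, n ≠ 0 → f i j n = 0) (hg : ∀ i j n, n ≠ 0 → g i j n = 0) (i j l : ℕ) :
    bstar f g i j l = ∑ i1 ∈ range (i + 1), ∑ j1 ∈ range (j + 1),
      ((j1 + l).choose l : ℂ) * f i1 (j1 + l) 0 *
        (((i - i1 + l).choose l : ℂ) * g (i - i1 + l) (j - j1) 0) := by
  unfold bstar
  rw [sum_eq_single_of_mem l (self_mem_range_succ l)]
  · have hl : (l.factorial : ℂ) ≠ 0 := Nat.cast_ne_zero.mpr l.factorial_ne_zero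
    simp only [Nat.sub_self, Nat.zero_sub, zero_add, range_one, sum_singleton, Nat.factorial_zero,
      Nat.cast_one, one_mul, div_self hl, Nat.cast_factorial_add_div]
    refine sum_congr rfl fun _ _ => sum_congr rfl fun _ _ => ?_
    ring
  · intro k hk hkl
    refine sum_eq_zero fun n hn => sum_eq_zero fun i1 _ => sum_eq_zero fun j1 _ => ?_
    rw [mem_range] at hk hn
    by_cases hn0 : n = 0
    · rw [hg _ _ _ (by omega), mul_zero]
    · rw [hf _ _ _ hn0, mul_zero, zero_mul, zero_mul]

theorem Pmon_apply_of_ne_zero (n i j k : ℕ) (hk : k ≠ 0) : Pmon n i j k = 0 := by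
  simp [Pmon, hk]

theorem Qmon_apply_of_ne_zero (m i j k : ℕ) (hk : k ≠ 0) : Qmon m i j k = 0 := by
  simp [Qmon, hk]

/-- in the Borel dual algebra,
`p^n * q^m = Σ_k C(n,k)·C(m,k)·p^{n-k} q^{m-k} ξ^k`. -/
theorem bstar_pow_p_pow_q (n m : ℕ) :
    bstar (Pmon n) (Qmon m) = fun i j k =>
      if i + k = m ∧ j + k = n then ((n.choose k : ℂ) * (m.choose k : ℂ)) else 0 := by
  funext i j l
  rw [bstar_apply_of_xi_free (Pmon_apply_of_ne_zero n) (Qmon_apply_of_ne_zero m),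
    sum_eq_single_of_mem 0 (mem_range.mpr i.succ_pos), sum_eq_single_of_mem j (self_mem_range_succ j)]
  · by_cases h : i + l = m ∧ j + l = n
    · obtain ⟨rfl, rfl⟩ := h
      simp [Pmon, Qmon]
    · simp only [Pmon, Qmon, Nat.sub_zero, Nat.sub_self, if_neg h]
      grind
  · intro j1 hj1 hj1j
    rw [mem_range] at hj1
    simp [Qmon, show j - j1 ≠ 0 by omega]
  · intro i1 _ hi1
    simp [Pmon, hi1]
end

section
/- In the Borel dual algebra, the * product of the geometric series 1/(1-p) and 1/(1-q) equals the geometric series expansion of 1/((1-p)(1-q) - ξ), i.e. Σ_{k≥0} ξ^k/((1-p)^{k+1}(1-q)^{k+1}), as formal power series in ξ, q, p. -/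
/-!
Both factors are free of `ξ`, so in `γ_l` only `n = m = 0`, `k = l` survives, and it equals
`(1/l!) ∂_p^l (1-p)⁻¹ · (1/l!) ∂_q^l (1-q)⁻¹ = (1-p)^{-(l+1)} (1-q)^{-(l+1)}`, whose coefficient of
`q^i p^j` is `C(i+l,l) C(j+l,l)`.
-/

open Finset

theorem bstar_geomP_apply (g : ℕ → ℕ → ℕ → ℂ) (i j l : ℕ) :
    bstar geomP g i j l =
      ∑ k ∈ range (l + 1), ∑ j1 ∈ range (j + 1),
        ((l - k).factorial * k.factorial / l.factorial : ℂ) * (j1 + k).choose k *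
          (i + k).choose k * g (i + k) (j - j1) (l - k) := by
  refine sum_congr rfl fun k _ => ?_
  rw [sum_eq_single_of_mem 0 (by simp), sum_eq_single_of_mem 0 (by simp)]
  · refine sum_congr rfl fun j1 _ => ?_
    rw [← Nat.choose_symm_add, ← Nat.choose_symm_add, Nat.cast_add_choose, Nat.cast_add_choose]
    simp only [geomP, and_self, if_true, Nat.sub_zero, Nat.factorial_zero, Nat.cast_one]
    ring
  · intro i1 _ hi1
    simp [geomP, hi1]
  · intro n _ hn
    simp [geomP, hn]

/-- `1/(1-p) * 1/(1-q) = 1/((1-p)(1-q) - ξ) = Σ_k ξ^k/((1-p)^{k+1}(1-q)^{k+1})`,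
whose coefficient of `q^i p^j ξ^k` is `C(i+k,k)·C(j+k,k)`. -/
theorem bstar_geomP_geomQ :
    bstar geomP geomQ = fun i j k => (((i + k).choose k : ℂ) * ((j + k).choose k : ℂ)) := by
  funext i j l
  rw [bstar_geomP_apply, sum_eq_single_of_mem l (self_mem_range_succ l),
    sum_eq_single_of_mem j (self_mem_range_succ j)]
  · have hl : (l.factorial : ℂ) ≠ 0 := Nat.cast_ne_zero.mpr l.factorial_ne_zero
    simp only [geomQ, Nat.sub_self, and_self, if_true, Nat.factorial_zero, Nat.cast_one]
    field_simp
  · intro j1 hj1 hne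
    have : j - j1 ≠ 0 := by rw [mem_range] at hj1; omega
    simp [geomQ, this]
  · intro k hk hne
    have : l - k ≠ 0 := by rw [mem_range] at hk; omega
    simp [geomQ, this]
end

section
/- The Borel dual product * on ℂ[[ξ,q,p]] is associative and satisfies the commutation relation p * q - q * p = -ξ (equivalently p * q = qp + ξ and q * p = qp), and ξ^n * ξ^m = (n! m!/(n+m)!) ξ^{n+m}. -/
open Finset

/-- the variable `p` -/
def Pvar : ℕ → ℕ → ℕ → ℂ := fun i j k => if i = 0 ∧ j = 1 ∧ k = 0 then 1 else 0

/-- the variable `q` -/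
def Qvar : ℕ → ℕ → ℕ → ℂ := fun i j k => if i = 1 ∧ j = 0 ∧ k = 0 then 1 else 0

/-- the monomial `ξ^n` -/
def Xmon (n : ℕ) : ℕ → ℕ → ℕ → ℂ := fun i j k => if i = 0 ∧ j = 0 ∧ k = n then 1 else 0

/-!
Multiplying the coefficient of `ξ^l` by `l!` (the formal Laplace transform, inverse to the Borel
transform) turns `bstar` into the normal-ordered star product
`f ⋆ g = Σ_k t^k/k! · ∂_p^k f · ∂_q^k g`, so it suffices to show that `⋆` is associative. It is the
composition law of normally ordered operators: letting `q^x p^y t^z` act on `ℂ[[q,t]]` as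
`q^x t^(y+z) ∂_q^y`, Leibniz' rule for `∂_q^y (q^x' ·)` gives `act (f ⋆ g) = act f ∘ act g`, and
this action is faithful, as one sees by induction on the `p`-degree, testing on the monomials `q^J`.
The relations follow from a closed formula for the product of two monomials.
-/

theorem Nat.descFactorial_add_eq_sum (B C j : ℕ) :
    (B + C).descFactorial j =
      ∑ s ∈ range (j + 1), j.choose s * B.descFactorial s * C.descFactorial (j - s) := by
  rw [Nat.descFactorial_eq_factorial_mul_choose, Nat.add_choose_eq,
    Finset.Nat.sum_antidiagonal_eq_sum_range_succ_mk, Finset.mul_sum]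
  refine Finset.sum_congr rfl fun s hs => ?_
  rw [Nat.descFactorial_eq_factorial_mul_choose B, Nat.descFactorial_eq_factorial_mul_choose C,
    ← Nat.choose_mul_factorial_mul_factorial (Finset.mem_range_succ_iff.mp hs)]
  ring

theorem Nat.descFactorial_mul_descFactorial_eq_sum (A B j j' : ℕ) :
    (A - j' + B).descFactorial j * A.descFactorial j' =
      ∑ s ∈ range (j + 1), j.choose s * B.descFactorial s * A.descFactorial (j + j' - s) := by
  rcases le_or_gt j' A with hj' | hj'
  · rw [add_comm, Nat.descFactorial_add_eq_sum, Finset.sum_mul]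
    refine Finset.sum_congr rfl fun s hs => ?_
    have hs := Finset.mem_range_succ_iff.mp hs
    rw [← Nat.descFactorial_mul_descFactorial (show j' ≤ j + j' - s by omega),
      show j + j' - s - j' = j - s by omega]
    ring
  · rw [Nat.descFactorial_eq_zero_iff_lt.mpr hj', mul_zero]
    refine (Finset.sum_eq_zero fun s hs => ?_).symm
    have hs := Finset.mem_range_succ_iff.mp hs
    rw [Nat.descFactorial_eq_zero_iff_lt.mpr (show A < j + j' - s by omega), mul_zero]

-- `f i j l` is here the coefficient of `q^i p^j t^l`.
noncomputable def nstar (f g : ℕ → ℕ → ℕ → ℂ) : ℕ → ℕ → ℕ → ℂ := fun i j l =>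
  ∑ k ∈ range (l + 1), ∑ n ∈ range (l - k + 1), ∑ i₁ ∈ range (i + 1), ∑ j₁ ∈ range (j + 1),
    ((j₁ + k).choose k : ℂ) * ((i - i₁ + k).descFactorial k : ℂ) *
      f i₁ (j₁ + k) n * g (i - i₁ + k) (j - j₁) (l - k - n)

-- `v a c` is the coefficient of `q^a t^c`.
noncomputable def act (f : ℕ → ℕ → ℕ → ℂ) (v : ℕ → ℕ → ℂ) : ℕ → ℕ → ℂ := fun a c =>
  ∑ x ∈ range (a + 1), ∑ y ∈ range (c + 1), ∑ z ∈ range (c - y + 1),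
    f x y z * ((a - x + y).descFactorial y : ℂ) * v (a - x + y) (c - y - z)

/-- An index `⟨⟨x₁, y₁, z₁, x₂, y₂, z₂⟩, s⟩` records the monomials `q^x₁ p^y₁ t^z₁` of `f` and
`q^x₂ p^y₂ t^z₂` of `g`, and the number `s` of the derivatives `∂_q^y₁` that fall on `q^x₂`; the
filter keeps exactly the indices whose term can be nonzero. -/
def leibnizIndex (a c : ℕ) :
    Finset ((_ : (_ : ℕ) × (_ : ℕ) × (_ : ℕ) × (_ : ℕ) × (_ : ℕ) × ℕ) × ℕ) :=
  (((range (a + 1)).sigma fun x₁ => (range (c + 1)).sigma fun y₁ =>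
      (range (c - y₁ + 1)).sigma fun z₁ => (range (a - x₁ + y₁ + 1)).sigma fun _ =>
      (range (c - y₁ - z₁ + 1)).sigma fun y₂ => range (c - y₁ - z₁ - y₂ + 1)).sigma
        fun r => range (r.2.1 + 1)).filter
    fun r => r.2 ≤ r.1.2.2.2.1 ∧ r.1.1 + r.1.2.2.2.1 ≤ a + r.2

noncomputable def leibnizTerm (f g : ℕ → ℕ → ℕ → ℂ) (v : ℕ → ℕ → ℂ) (a c : ℕ) :
    (_ : (_ : ℕ) × (_ : ℕ) × (_ : ℕ) × (_ : ℕ) × (_ : ℕ) × ℕ) × ℕ → ℂ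
  | ⟨⟨x₁, y₁, z₁, x₂, y₂, z₂⟩, s⟩ =>
    ((y₁.choose s * x₂.descFactorial s *
        (a - x₁ + y₁ - x₂ + y₂).descFactorial (y₁ + y₂ - s) : ℕ) : ℂ) *
      f x₁ y₁ z₁ * g x₂ y₂ z₂ * v (a - x₁ + y₁ - x₂ + y₂) (c - y₁ - z₁ - y₂ - z₂)

theorem act_act_apply (f g : ℕ → ℕ → ℕ → ℂ) (v : ℕ → ℕ → ℂ) (a c : ℕ) :
    act f (act g v) a c = ∑ r ∈ leibnizIndex a c, leibnizTerm f g v a c r := by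
  rw [leibnizIndex, Finset.sum_filter_of_ne, Finset.sum_sigma]
  · conv_lhs => simp only [act, Finset.mul_sum, Finset.sum_sigma']
    refine Finset.sum_congr rfl fun ⟨x₁, y₁, z₁, x₂, y₂, z₂⟩ hr => ?_
    simp only [Finset.mem_sigma, Finset.mem_range] at hr
    have leibniz := Nat.descFactorial_mul_descFactorial_eq_sum
      (a - x₁ + y₁ - x₂ + y₂) x₂ y₁ y₂
    rw [show a - x₁ + y₁ - x₂ + y₂ - y₂ + x₂ = a - x₁ + y₁ by omega] at leibniz
    simp only [leibnizTerm]
    rw [← Finset.sum_mul, ← Finset.sum_mul, ← Finset.sum_mul, ← Nat.cast_sum, ← leibniz]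
    push_cast
    ring
  · rintro ⟨⟨x₁, y₁, z₁, x₂, y₂, z₂⟩, s⟩ hr hne
    simp only [Finset.mem_sigma, Finset.mem_range] at hr
    by_contra hbad
    refine hne ?_
    dsimp only at hbad
    have hzero : y₁.choose s * x₂.descFactorial s *
        (a - x₁ + y₁ - x₂ + y₂).descFactorial (y₁ + y₂ - s) = 0 := by
      rcases not_and_or.mp hbad with hs | hx
      · rw [Nat.descFactorial_eq_zero_iff_lt.mpr (by omega : x₂ < s), mul_zero, zero_mul]
      · rw [Nat.descFactorial_eq_zero_iff_lt.mpr (by omega : a - x₁ + y₁ - x₂ + y₂ < y₁ + y₂ - s),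
          mul_zero]
    rw [leibnizTerm, hzero, Nat.cast_zero, zero_mul, zero_mul, zero_mul]

theorem act_nstar_apply (f g : ℕ → ℕ → ℕ → ℂ) (v : ℕ → ℕ → ℂ) (a c : ℕ) :
    act (nstar f g) v a c = ∑ r ∈ leibnizIndex a c, leibnizTerm f g v a c r := by
  simp only [act, nstar, Finset.sum_mul, Finset.sum_sigma']
  symm
  -- The `k` contractions of `f ⋆ g` are the `s` derivatives falling on `q^x₂`:
  -- `X = x₁ + x₂ - s`, `Y = y₁ + y₂ - s`, `Z = z₁ + z₂ + s`.
  refine Finset.sum_nbij'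
    (fun r => ⟨r.1.1 + r.1.2.2.2.1 - r.2, r.1.2.1 - r.2 + r.1.2.2.2.2.1,
        r.1.2.2.1 + r.1.2.2.2.2.2 + r.2, r.2, r.1.2.2.1, r.1.1, r.1.2.1 - r.2⟩)
    (fun p => ⟨⟨p.2.2.2.2.2.1, p.2.2.2.2.2.2 + p.2.2.2.1, p.2.2.2.2.1,
        p.1 - p.2.2.2.2.2.1 + p.2.2.2.1, p.2.1 - p.2.2.2.2.2.2,
        p.2.2.1 - p.2.2.2.1 - p.2.2.2.2.1⟩, p.2.2.2.1⟩)
    ?_ ?_ ?_ ?_ ?_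
  · rintro ⟨⟨x₁, y₁, z₁, x₂, y₂, z₂⟩, s⟩ hr
    simp only [leibnizIndex, Finset.mem_filter, Finset.mem_sigma, Finset.mem_range] at hr
    simp only [Finset.mem_sigma, Finset.mem_range]
    omega
  · rintro ⟨X, Y, Z, k, n, x₁, u⟩ hp
    simp only [Finset.mem_sigma, Finset.mem_range] at hp
    simp only [leibnizIndex, Finset.mem_filter, Finset.mem_sigma, Finset.mem_range]
    omega
  · rintro ⟨⟨x₁, y₁, z₁, x₂, y₂, z₂⟩, s⟩ hr
    simp only [leibnizIndex, Finset.mem_filter, Finset.mem_sigma, Finset.mem_range] at hr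
    simp only [Sigma.mk.inj_iff, heq_eq_eq, true_and, and_true]
    omega
  · rintro ⟨X, Y, Z, k, n, x₁, u⟩ hp
    simp only [Finset.mem_sigma, Finset.mem_range] at hp
    simp only [Sigma.mk.inj_iff, heq_eq_eq, true_and]
    omega
  · rintro ⟨⟨x₁, y₁, z₁, x₂, y₂, z₂⟩, s⟩ hr
    simp only [leibnizIndex, Finset.mem_filter, Finset.mem_sigma, Finset.mem_range] at hr
    simp only [leibnizTerm]
    rw [show y₁ - s + s = y₁ by omega, show x₁ + x₂ - s - x₁ + s = x₂ by omega,
      show y₁ - s + y₂ - (y₁ - s) = y₂ by omega, show z₁ + z₂ + s - s - z₁ = z₂ by omega,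
      show a - (x₁ + x₂ - s) + (y₁ - s + y₂) = a - x₁ + y₁ - x₂ + y₂ by omega,
      show c - (y₁ - s + y₂) - (z₁ + z₂ + s) = c - y₁ - z₁ - y₂ - z₂ by omega,
      show y₁ - s + y₂ = y₁ + y₂ - s by omega]
    push_cast
    ring

theorem act_delta_apply (f : ℕ → ℕ → ℕ → ℂ) (I J K : ℕ) (hf : ∀ y < J, ∀ x z, f x y z = 0) :
    act f (fun a c => if a = J ∧ c = 0 then 1 else 0) I (J + K) = f I J K * J.factorial := by
  have hJ : J ∈ range (J + K + 1) := Finset.mem_range.mpr (by omega)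
  have hK : K ∈ range (J + K - J + 1) := Finset.mem_range.mpr (by omega)
  rw [act, Finset.sum_eq_single_of_mem I (Finset.self_mem_range_succ I),
    Finset.sum_eq_single_of_mem J hJ, Finset.sum_eq_single_of_mem K hK]
  · simp [Nat.descFactorial_self]
  · intro z hz hzK
    have hz := Finset.mem_range_succ_iff.mp hz
    rw [if_neg (by omega), mul_zero]
  · intro y _ hy
    refine Finset.sum_eq_zero fun z _ => ?_
    rcases lt_or_gt_of_ne hy with hy | hy
    · rw [hf y hy, zero_mul, zero_mul]
    · rw [if_neg (by omega), mul_zero]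
  · intro x hx hxI
    have hx := Finset.mem_range_succ_iff.mp hx
    refine Finset.sum_eq_zero fun y _ => Finset.sum_eq_zero fun z _ => ?_
    rcases lt_or_ge y J with hy | hy
    · rw [hf y hy, zero_mul, zero_mul]
    · rw [if_neg (by omega), mul_zero]

theorem act_sub (f g : ℕ → ℕ → ℕ → ℂ) (v : ℕ → ℕ → ℂ) : act (f - g) v = act f v - act g v := by
  funext a c
  simp only [act, Pi.sub_apply, sub_mul, Finset.sum_sub_distrib]

theorem eq_of_act_eq {f g : ℕ → ℕ → ℕ → ℂ} (h : ∀ v, act f v = act g v) : f = g := by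
  suffices hzero : ∀ J I K, (f - g) I J K = 0 by
    funext I J K
    exact sub_eq_zero.mp (hzero J I K)
  intro J
  induction J using Nat.strong_induction_on with
  | _ J ih =>
    intro I K
    have hdelta := act_delta_apply (f - g) I J K ih
    rw [act_sub, h, sub_self] at hdelta
    exact (mul_eq_zero.mp hdelta.symm).resolve_right (by exact_mod_cast J.factorial_ne_zero)

theorem act_nstar (f g : ℕ → ℕ → ℕ → ℂ) (v : ℕ → ℕ → ℂ) :
    act (nstar f g) v = act f (act g v) := by
  funext a c
  rw [act_nstar_apply, act_act_apply]

theorem nstar_assoc (f g h : ℕ → ℕ → ℕ → ℂ) : nstar (nstar f g) h = nstar f (nstar g h) :=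
  eq_of_act_eq fun v => by simp only [act_nstar]

def laplace (f : ℕ → ℕ → ℕ → ℂ) : ℕ → ℕ → ℕ → ℂ := fun i j l => l.factorial * f i j l

theorem laplace_injective : Function.Injective laplace := fun f g h => by
  funext i j l
  exact mul_left_cancel₀ (by exact_mod_cast l.factorial_ne_zero)
    (congrFun (congrFun (congrFun h i) j) l)

theorem laplace_bstar (f g : ℕ → ℕ → ℕ → ℂ) :
    laplace (bstar f g) = nstar (laplace f) (laplace g) := by
  funext i j l
  simp only [laplace, bstar, nstar, Finset.mul_sum]
  refine Finset.sum_congr rfl fun k _ => Finset.sum_congr rfl fun n _ =>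
    Finset.sum_congr rfl fun i₁ _ => Finset.sum_congr rfl fun j₁ _ => ?_
  have hchoose : ((j₁ + k).choose k : ℂ) = (j₁ + k).factorial / (k.factorial * j₁.factorial) := by
    rw [Nat.cast_choose ℂ (Nat.le_add_left k j₁), Nat.add_sub_cancel]
  have hdesc : ((i - i₁ + k).descFactorial k : ℂ) * (i - i₁).factorial = (i - i₁ + k).factorial := by
    have := Nat.factorial_mul_descFactorial (Nat.le_add_left k (i - i₁))
    rw [Nat.add_sub_cancel] at this
    exact_mod_cast (mul_comm _ _).trans this
  rw [hchoose, ← hdesc]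
  have hl : (l.factorial : ℂ) ≠ 0 := by exact_mod_cast l.factorial_ne_zero
  have hi : ((i - i₁).factorial : ℂ) ≠ 0 := by exact_mod_cast (i - i₁).factorial_ne_zero
  field_simp

theorem bstar_assoc (f g h : ℕ → ℕ → ℕ → ℂ) : bstar (bstar f g) h = bstar f (bstar g h) :=
  laplace_injective <| by simp only [laplace_bstar, nstar_assoc]

def monomial (a b c : ℕ) : ℕ → ℕ → ℕ → ℂ := fun i j k => if i = a ∧ j = b ∧ k = c then 1 else 0

theorem bstar_monomial_monomial (a₁ b₁ c₁ a₂ b₂ c₂ i j l : ℕ) :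
    bstar (monomial a₁ b₁ c₁) (monomial a₂ b₂ c₂) i j l =
      if c₁ + c₂ ≤ l ∧ l - c₁ - c₂ ≤ b₁ ∧ l - c₁ - c₂ ≤ a₂ ∧
          i + (l - c₁ - c₂) = a₁ + a₂ ∧ j + (l - c₁ - c₂) = b₁ + b₂ then
        (c₁.factorial * c₂.factorial * (l - c₁ - c₂).factorial / l.factorial : ℂ) *
          (b₁.choose (l - c₁ - c₂) : ℂ) * (a₂.choose (l - c₁ - c₂) : ℂ)
      else 0 := by
  set k₀ := l - c₁ - c₂ with hk₀
  simp only [bstar, monomial, Finset.sum_sigma']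
  split_ifs with H
  · obtain ⟨hl, hb₁, ha₂, hi, hj⟩ := H
    rw [Finset.sum_eq_single_of_mem (⟨k₀, c₁, a₁, b₁ - k₀⟩ : (_ : ℕ) × (_ : ℕ) × (_ : ℕ) × ℕ)
      (by simp only [Finset.mem_sigma, Finset.mem_range]; omega)]
    · dsimp only
      rw [if_pos ⟨rfl, by omega, rfl⟩, if_pos ⟨by omega, by omega, by omega⟩,
        show b₁ - k₀ + k₀ = b₁ by omega, show l - k₀ - c₁ = c₂ by omega,
        show i - a₁ = a₂ - k₀ by omega, Nat.sub_add_cancel ha₂,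
        Nat.cast_choose ℂ hb₁, Nat.cast_choose ℂ ha₂]
      field_simp
    · rintro ⟨k, n, i₁, j₁⟩ hmem hne
      dsimp only
      simp only [Finset.mem_sigma, Finset.mem_range] at hmem
      split_ifs with hf hg <;> try simp only [mul_zero, zero_mul]
      exact absurd (by simp only [Sigma.mk.inj_iff, heq_eq_eq]; omega) hne
  · refine Finset.sum_eq_zero fun ⟨k, n, i₁, j₁⟩ hmem => ?_
    dsimp only
    simp only [Finset.mem_sigma, Finset.mem_range] at hmem
    split_ifs with hf hg <;> try simp only [mul_zero, zero_mul]
    exact absurd (by omega) H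

theorem bstar_Pvar_Qvar : bstar Pvar Qvar = fun i j k =>
    if (i = 1 ∧ j = 1 ∧ k = 0) ∨ (i = 0 ∧ j = 0 ∧ k = 1) then 1 else 0 := by
  funext i j l
  rw [show Pvar = monomial 0 1 0 from rfl, show Qvar = monomial 1 0 0 from rfl,
    bstar_monomial_monomial]
  split_ifs with H h
  · obtain ⟨rfl, rfl, rfl⟩ | ⟨rfl, rfl, rfl⟩ := h <;> simp
  all_goals first | rfl | omega

theorem bstar_Qvar_Pvar : bstar Qvar Pvar = fun i j k =>
    if i = 1 ∧ j = 1 ∧ k = 0 then 1 else 0 := by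
  funext i j l
  rw [show Pvar = monomial 0 1 0 from rfl, show Qvar = monomial 1 0 0 from rfl,
    bstar_monomial_monomial]
  split_ifs with H h
  · obtain ⟨rfl, rfl, rfl⟩ := h
    simp
  all_goals first | rfl | omega

theorem bstar_Xmon_Xmon (n m : ℕ) : bstar (Xmon n) (Xmon m) = fun i j k =>
    if i = 0 ∧ j = 0 ∧ k = n + m then
      (n.factorial : ℂ) * (m.factorial : ℂ) / ((n + m).factorial : ℂ) else 0 := by
  funext i j l
  rw [show Xmon n = monomial 0 0 n from rfl, show Xmon m = monomial 0 0 m from rfl,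
    bstar_monomial_monomial]
  split_ifs with H h
  · obtain ⟨rfl, rfl, rfl⟩ := h
    simp
  all_goals first | rfl | omega

/-- the Borel dual product `*` is associative, satisfies
`p * q = qp + ξ` and `q * p = qp` (so `p * q - q * p = ξ`), and
`ξ^n * ξ^m = (n! m!/(n+m)!)·ξ^{n+m}`. -/
theorem bstar_assoc_and_relations :
    (∀ f g h : ℕ → ℕ → ℕ → ℂ, bstar (bstar f g) h = bstar f (bstar g h)) ∧
    (bstar Pvar Qvar = fun i j k =>
      if (i = 1 ∧ j = 1 ∧ k = 0) ∨ (i = 0 ∧ j = 0 ∧ k = 1) then 1 else 0) ∧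
    (bstar Qvar Pvar = fun i j k => if i = 1 ∧ j = 1 ∧ k = 0 then 1 else 0) ∧
    (∀ n m : ℕ, bstar (Xmon n) (Xmon m) = fun i j k =>
      if i = 0 ∧ j = 0 ∧ k = n + m then
        (n.factorial : ℂ) * (m.factorial : ℂ) / ((n + m).factorial : ℂ) else 0) :=
  ⟨bstar_assoc, bstar_Pvar_Qvar, bstar_Qvar_Pvar, bstar_Xmon_Xmon⟩
end

section
/- If f, g ∈ ℂ[[ξ,q,p]] are power series whose coefficients define convergent power series (i.e. f, g ∈ ℂ{ξ,q,p}), then their Borel dual product f * g is also a convergent power series. Hence ℂ{ξ,q,p} is a (non-commutative) subalgebra of (ℂ[[ξ,q,p]], *). -/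
open Finset

/-- A power series in `(ξ,q,p)` is convergent (lies in `ℂ{ξ,q,p}`) iff its
coefficients admit a geometric bound. -/
def IsConvergent (f : ℕ → ℕ → ℕ → ℂ) : Prop :=
  ∃ C R : ℝ, 0 < C ∧ 0 < R ∧ ∀ i j k, ‖f i j k‖ ≤ C * R ^ (i + j + k)

/-!
Every term of the sum defining the coefficient of `q^i p^j ξ^l` in `f * g` is small: the weight
`n! m! k! / (n+m+k)!` is at most `1`, the two binomial factors coming from `∂_p^k` and `∂_q^k`
are at most `2^(j+l)` and `2^(i+l)`, and the coefficients of `f` and `g` that occur have total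
degree at most `i + j + l`. As there are at most `(l+1)²(i+1)(j+1) ≤ 4^(i+j+l)` terms, the
coefficient is bounded by `C_f C_g (16 R²)^(i+j+l)`.
-/

open scoped Nat

theorem Nat.factorial_mul_factorial_mul_factorial_le (n m k : ℕ) :
    n ! * m ! * k ! ≤ (n + m + k)! :=
  calc n ! * m ! * k ! ≤ (n + m)! * k ! :=
        Nat.mul_le_mul_right _ (Nat.le_of_dvd (Nat.factorial_pos _)
          (Nat.factorial_mul_factorial_dvd_factorial_add n m))
    _ ≤ (n + m + k)! :=
        Nat.le_of_dvd (Nat.factorial_pos _) (Nat.factorial_mul_factorial_dvd_factorial_add _ k)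

theorem norm_factorial_mul_factorial_mul_factorial_div_le_one {n m k l : ℕ}
    (h : n + m + k = l) : ‖(n ! * m ! * k ! / l ! : ℂ)‖ ≤ 1 := by
  simp only [norm_div, norm_mul, Complex.norm_natCast, ← h]
  rw [div_le_one (by positivity)]
  exact_mod_cast Nat.factorial_mul_factorial_mul_factorial_le n m k

theorem norm_add_factorial_div_factorial_mul_factorial_le (a b : ℕ) :
    ‖((a + b)! / (a ! * b !) : ℂ)‖ ≤ 2 ^ (a + b) := by
  rw [← Nat.cast_add_choose, Complex.norm_natCast]
  exact_mod_cast Nat.choose_le_two_pow _ _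

theorem norm_sum_range_le_mul {E : Type*} [SeminormedAddCommGroup E] {f : ℕ → E} {n : ℕ} {T : ℝ}
    (h : ∀ x < n, ‖f x‖ ≤ T) : ‖∑ x ∈ range n, f x‖ ≤ n * T :=
  (norm_sum_le_of_le _ fun x hx => h x (mem_range.mp hx)).trans_eq (by simp)

theorem norm_le_mul_pow_of_le {E : Type*} [Norm E] {f : ℕ → ℕ → ℕ → E} {C R R' : ℝ}
    (hf : ∀ a b c, ‖f a b c‖ ≤ C * R ^ (a + b + c)) (hC : 0 ≤ C) (hR : 0 ≤ R) (hRR' : R ≤ R')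
    (hR' : 1 ≤ R') {a b c N : ℕ} (h : a + b + c ≤ N) : ‖f a b c‖ ≤ C * R' ^ N :=
  (hf a b c).trans <| mul_le_mul_of_nonneg_left
    ((pow_le_pow_left₀ hR hRR' _).trans (pow_le_pow_right₀ hR' h)) hC

noncomputable def bstarTerm (f g : ℕ → ℕ → ℕ → ℂ) (i j l k n i1 j1 : ℕ) : ℂ :=
  ((n ! : ℂ) * ((l - k - n)! : ℂ) * (k ! : ℂ) / (l ! : ℂ)) *
    (((j1 + k)! : ℂ) / ((j1 ! : ℂ) * (k ! : ℂ))) * f i1 (j1 + k) n *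
    ((((i - i1) + k)! : ℂ) / (((i - i1)! : ℂ) * (k ! : ℂ))) *
    g ((i - i1) + k) (j - j1) (l - k - n)

theorem bstar_eq_sum_bstarTerm (f g : ℕ → ℕ → ℕ → ℂ) (i j l : ℕ) :
    bstar f g i j l = ∑ k ∈ range (l + 1), ∑ n ∈ range (l - k + 1), ∑ i1 ∈ range (i + 1),
      ∑ j1 ∈ range (j + 1), bstarTerm f g i j l k n i1 j1 :=
  rfl

theorem norm_bstarTerm_le {f g : ℕ → ℕ → ℕ → ℂ} {Cf Cg R : ℝ} {i j l k n i1 j1 : ℕ}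
    (hf : ∀ a b c, a + b + c ≤ i + j + l → ‖f a b c‖ ≤ Cf * R ^ (i + j + l))
    (hg : ∀ a b c, a + b + c ≤ i + j + l → ‖g a b c‖ ≤ Cg * R ^ (i + j + l))
    (hCf : 0 ≤ Cf) (hCg : 0 ≤ Cg) (hR : 0 ≤ R)
    (hk : k ≤ l) (hn : n ≤ l - k) (hi1 : i1 ≤ i) (hj1 : j1 ≤ j) :
    ‖bstarTerm f g i j l k n i1 j1‖ ≤ Cf * Cg * (4 * R ^ 2) ^ (i + j + l) := by
  have binom_f : ‖((j1 + k)! / (j1 ! * k !) : ℂ)‖ ≤ 2 ^ (j + l) :=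
    (norm_add_factorial_div_factorial_mul_factorial_le _ _).trans
      (pow_le_pow_right₀ one_le_two (by omega))
  have binom_g : ‖((i - i1 + k)! / ((i - i1)! * k !) : ℂ)‖ ≤ 2 ^ (i + l) :=
    (norm_add_factorial_div_factorial_mul_factorial_le _ _).trans
      (pow_le_pow_right₀ one_le_two (by omega))
  unfold bstarTerm
  simp only [norm_mul]
  calc _ ≤ 1 * 2 ^ (j + l) * (Cf * R ^ (i + j + l)) * 2 ^ (i + l) * (Cg * R ^ (i + j + l)) := by
        gcongr
        · exact norm_factorial_mul_factorial_mul_factorial_div_le_one (by omega)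
        · exact hf _ _ _ (by omega)
        · exact hg _ _ _ (by omega)
    _ = Cf * Cg * (2 ^ (i + j + 2 * l) * (R ^ 2) ^ (i + j + l)) := by ring
    _ ≤ Cf * Cg * (4 ^ (i + j + l) * (R ^ 2) ^ (i + j + l)) := by
        have two_pow_le : (2 : ℝ) ^ (i + j + 2 * l) ≤ 4 ^ (i + j + l) := by
          rw [show (4 : ℝ) = 2 ^ 2 by norm_num, ← pow_mul]
          exact pow_le_pow_right₀ one_le_two (by omega)
        gcongr
    _ = Cf * Cg * (4 * R ^ 2) ^ (i + j + l) := by rw [mul_pow]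

theorem norm_bstar_le {f g : ℕ → ℕ → ℕ → ℂ} {i j l : ℕ} {T : ℝ}
    (hT : ∀ k ≤ l, ∀ n ≤ l - k, ∀ i1 ≤ i, ∀ j1 ≤ j, ‖bstarTerm f g i j l k n i1 j1‖ ≤ T) :
    ‖bstar f g i j l‖ ≤ 4 ^ (i + j + l) * T := by
  have count : (l + 1) * (l + 1) * (i + 1) * (j + 1) ≤ 4 ^ (i + j + l) :=
    calc (l + 1) * (l + 1) * (i + 1) * (j + 1) ≤ 2 ^ l * 2 ^ l * 2 ^ i * 2 ^ j := by
          gcongr <;> exact Nat.lt_two_pow_self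
      _ = 2 ^ (2 * l + i + j) := by ring
      _ ≤ 2 ^ (2 * (i + j + l)) := Nat.pow_le_pow_right two_pos (by omega)
      _ = 4 ^ (i + j + l) := by rw [pow_mul]; norm_num
  have hT0 : 0 ≤ T :=
    (norm_nonneg _).trans (hT 0 l.zero_le 0 (l - 0).zero_le 0 i.zero_le 0 j.zero_le)
  have inner (k : ℕ) (hk : k ≤ l) : ‖∑ n ∈ range (l - k + 1), ∑ i1 ∈ range (i + 1),
      ∑ j1 ∈ range (j + 1), bstarTerm f g i j l k n i1 j1‖ ≤
        (l + 1 : ℕ) * ((i + 1 : ℕ) * ((j + 1 : ℕ) * T)) := by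
    refine (norm_sum_range_le_mul fun n hn => norm_sum_range_le_mul fun i1 hi1 =>
      norm_sum_range_le_mul fun j1 hj1 => hT k hk n (by omega) i1 (by omega) j1 (by omega)).trans ?_
    gcongr
    omega
  calc ‖bstar f g i j l‖ ≤ (l + 1 : ℕ) * ((l + 1 : ℕ) * ((i + 1 : ℕ) * ((j + 1 : ℕ) * T))) :=
        bstar_eq_sum_bstarTerm f g i j l ▸ norm_sum_range_le_mul fun k hk => inner k (by omega)
    _ = ((l + 1) * (l + 1) * (i + 1) * (j + 1) : ℕ) * T := by push_cast; ring
    _ ≤ 4 ^ (i + j + l) * T := by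
        gcongr
        exact_mod_cast count

/-- the Borel dual product of convergent power series is convergent;
`ℂ{ξ,q,p}` is a subalgebra of `(ℂ[[ξ,q,p]], *)`. -/
theorem bstar_convergent (f g : ℕ → ℕ → ℕ → ℂ)
    (hf : IsConvergent f) (hg : IsConvergent g) : IsConvergent (bstar f g) := by
  obtain ⟨Cf, Rf, hCf, hRf, hbf⟩ := hf
  obtain ⟨Cg, Rg, hCg, hRg, hbg⟩ := hg
  set R := max (max Rf Rg) 1
  have hR : 1 ≤ R := le_max_right _ _
  refine ⟨Cf * Cg, 16 * R ^ 2, by positivity, by positivity, fun i j l => ?_⟩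
  have hf' (a b c : ℕ) (h : a + b + c ≤ i + j + l) : ‖f a b c‖ ≤ Cf * R ^ (i + j + l) :=
    norm_le_mul_pow_of_le hbf hCf.le hRf.le ((le_max_left _ _).trans (le_max_left _ _)) hR h
  have hg' (a b c : ℕ) (h : a + b + c ≤ i + j + l) : ‖g a b c‖ ≤ Cg * R ^ (i + j + l) :=
    norm_le_mul_pow_of_le hbg hCg.le hRg.le ((le_max_right _ _).trans (le_max_left _ _)) hR h
  calc ‖bstar f g i j l‖ ≤ 4 ^ (i + j + l) * (Cf * Cg * (4 * R ^ 2) ^ (i + j + l)) :=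
        norm_bstar_le fun k hk n hn i1 hi1 j1 hj1 =>
          norm_bstarTerm_le hf' hg' hCf.le hCg.le (by positivity) hk hn hi1 hj1
    _ = Cf * Cg * (16 * R ^ 2) ^ (i + j + l) := by rw [mul_left_comm, ← mul_pow]; ring_nf
end

section
/- Dirichlet integral over the standard simplex: for any multi-index α = (α_1,…,α_n) of nonnegative integers, with s_1 = 1 − s_2 − ⋯ − s_n on the simplex Δ = {s ∈ ℝ^n : s_j ≥ 0, Σ s_j = 1} parametrized by (s_2,…,s_n), we have ∫_Δ s_1^{α_1}⋯s_n^{α_n} ds_2⋯ds_n = (∏_{j=1}^n α_j!)/(Σ_{j=1}^n α_j + n − 1)!. -/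
open MeasureTheory Finset
open scoped Pointwise

lemma beta_nat (a b : ℕ) :
    ∫ x in (0:ℝ)..1, x ^ a * (1 - x) ^ b =
      (a.factorial : ℝ) * b.factorial / (a + b + 1).factorial := by
  have h := Complex.Gamma_mul_Gamma_eq_betaIntegral
      (s := (a : ℂ) + 1) (t := (b : ℂ) + 1) (by simp; positivity) (by simp; positivity)
  have hBI : Complex.betaIntegral ((a : ℂ) + 1) ((b : ℂ) + 1) =
      ((∫ x in (0:ℝ)..1, x ^ a * (1 - x) ^ b : ℝ) : ℂ) := by
    rw [Complex.betaIntegral]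
    rw [← intervalIntegral.integral_ofReal]
    apply intervalIntegral.integral_congr
    intro x hx
    simp only [add_sub_cancel_right]
    rw [Complex.cpow_natCast, Complex.cpow_natCast]
    push_cast
    ring
  rw [hBI, Complex.Gamma_nat_eq_factorial, Complex.Gamma_nat_eq_factorial] at h
  have h2 : ((a : ℂ) + 1 + ((b : ℂ) + 1)) = ((a + b + 1 : ℕ) : ℂ) + 1 := by push_cast; ring
  rw [h2, Complex.Gamma_nat_eq_factorial] at h
  have hr : (a.factorial : ℝ) * b.factorial =
      (a + b + 1).factorial * ∫ x in (0:ℝ)..1, x ^ a * (1 - x) ^ b := by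
    exact_mod_cast h
  have hne : ((a + b + 1).factorial : ℝ) ≠ 0 := by exact_mod_cast (a + b + 1).factorial_ne_zero
  field_simp
  linarith

lemma isClosed_simplex (m : ℕ) :
    IsClosed {y : Fin m → ℝ | (∀ j, 0 ≤ y j) ∧ ∑ j, y j ≤ 1} := by
  have h1 : IsClosed {y : Fin m → ℝ | ∀ j, 0 ≤ y j} := by
    have : {y : Fin m → ℝ | ∀ j, 0 ≤ y j} = ⋂ j, {y | 0 ≤ y j} := by
      ext y; simp
    rw [this]
    exact isClosed_iInter fun j =>
      isClosed_le continuous_const (continuous_apply j)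
  have h2 : IsClosed {y : Fin m → ℝ | ∑ j, y j ≤ 1} :=
    isClosed_le (by continuity) continuous_const
  exact h1.inter h2

lemma isCompact_simplex (m : ℕ) :
    IsCompact {y : Fin m → ℝ | (∀ j, 0 ≤ y j) ∧ ∑ j, y j ≤ 1} := by
  refine IsCompact.of_isClosed_subset (isCompact_Icc (a := (0 : Fin m → ℝ)) (b := 1))
    (isClosed_simplex m) ?_
  rintro y ⟨h0, h1⟩
  refine ⟨h0, fun j => ?_⟩
  calc y j ≤ ∑ i, y i := Finset.single_le_sum (fun i _ => h0 i) (mem_univ j)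
  _ ≤ 1 := h1

lemma continuous_integrand (m : ℕ) (α₀ : ℕ) (α : Fin m → ℕ) :
    Continuous (fun y : Fin m → ℝ => (1 - ∑ j, y j) ^ α₀ * ∏ j, (y j) ^ (α j)) := by
  fun_prop

lemma scaled_simplex_integral (m : ℕ) (α₀ : ℕ) (α : Fin m → ℕ) {c : ℝ} (hc : 0 < c) :
    (∫ z in {z : Fin m → ℝ | (∀ j, 0 ≤ z j) ∧ ∑ j, z j ≤ c},
        (c - ∑ j, z j) ^ α₀ * ∏ j, (z j) ^ (α j)) =
      c ^ (α₀ + (∑ j, α j) + m) *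
        ∫ y in {y : Fin m → ℝ | (∀ j, 0 ≤ y j) ∧ ∑ j, y j ≤ 1},
          (1 - ∑ j, y j) ^ α₀ * ∏ j, (y j) ^ (α j) := by
  have hsm : {z : Fin m → ℝ | (∀ j, 0 ≤ z j) ∧ ∑ j, z j ≤ c} =
      c • {y : Fin m → ℝ | (∀ j, 0 ≤ y j) ∧ ∑ j, y j ≤ 1} := by
    ext z
    rw [Set.mem_smul_set_iff_inv_smul_mem₀ hc.ne']
    simp only [Set.mem_setOf_eq, Pi.smul_apply, smul_eq_mul, ← Finset.mul_sum]
    constructor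
    · rintro ⟨h0, h1⟩
      refine ⟨fun j => mul_nonneg (inv_nonneg.mpr hc.le) (h0 j), ?_⟩
      rw [inv_mul_le_iff₀ hc, mul_one]; exact h1
    · rintro ⟨h0, h1⟩
      refine ⟨fun j => ?_, ?_⟩
      · have := h0 j
        nlinarith [h0 j, inv_pos.mpr hc]
      · rw [inv_mul_le_iff₀ hc, mul_one] at h1; exact h1
  have hcv := Measure.setIntegral_comp_smul_of_pos (volume : Measure (Fin m → ℝ))
      (fun z => (c - ∑ j, z j) ^ α₀ * ∏ j, (z j) ^ (α j))
      {y : Fin m → ℝ | (∀ j, 0 ≤ y j) ∧ ∑ j, y j ≤ 1} hc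
  have hd : Module.finrank ℝ (Fin m → ℝ) = m := by simp
  rw [hd] at hcv
  have key : (∫ z in c • {y : Fin m → ℝ | (∀ j, 0 ≤ y j) ∧ ∑ j, y j ≤ 1},
      (c - ∑ j, z j) ^ α₀ * ∏ j, (z j) ^ (α j)) =
      c ^ m * ∫ x in {y : Fin m → ℝ | (∀ j, 0 ≤ y j) ∧ ∑ j, y j ≤ 1},
        (c - ∑ j, (c • x) j) ^ α₀ * ∏ j, ((c • x) j) ^ (α j) := by
    rw [hcv, smul_eq_mul, ← mul_assoc, mul_inv_cancel₀ (pow_ne_zero _ hc.ne'), one_mul]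
  rw [hsm, key]
  have hF : ∀ x : Fin m → ℝ, (c - ∑ j, (c • x) j) ^ α₀ * ∏ j, ((c • x) j) ^ (α j)
      = c ^ (α₀ + ∑ j, α j) * ((1 - ∑ j, x j) ^ α₀ * ∏ j, (x j) ^ (α j)) := by
    intro x
    simp only [Pi.smul_apply, smul_eq_mul, ← Finset.mul_sum]
    rw [show c - c * ∑ j, x j = c * (1 - ∑ j, x j) by ring, mul_pow]
    simp only [mul_pow, Finset.prod_mul_distrib, Finset.prod_pow_eq_pow_sum]
    rw [pow_add]
    ring
  simp_rw [hF]
  rw [MeasureTheory.integral_const_mul, pow_add]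
  ring

/-- Dirichlet's integral over the standard simplex.  With the
simplex `Δ = {s ∈ ℝ^{m+1} : s_j ≥ 0, Σ s_j = 1}` parametrized by
`y = (s_2,…,s_{m+1})` and `s_1 = 1 − Σ y_j`, one has for any nonnegative integer
exponents `α₀, α_1, …, α_m`:
`∫ s_1^{α₀} ∏_j y_j^{α_j} dy = (α₀! ∏_j α_j!)/((α₀ + Σ_j α_j + m)!)`. -/
theorem dirichlet_simplex_integral (m : ℕ) (α₀ : ℕ) (α : Fin m → ℕ) :
    (∫ y in {y : Fin m → ℝ | (∀ j, 0 ≤ y j) ∧ ∑ j, y j ≤ 1},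
        (1 - ∑ j, y j) ^ α₀ * ∏ j, (y j) ^ (α j)) =
      ((α₀.factorial : ℝ) * ∏ j, ((α j).factorial : ℝ)) /
        ((α₀ + (∑ j, α j) + m).factorial : ℝ) := by
  induction m generalizing α₀ with
  | zero =>
    have hs : {y : Fin 0 → ℝ | (∀ j, 0 ≤ y j) ∧ ∑ j, y j ≤ 1} = Set.univ := by
      ext y; simp
    rw [hs, Measure.restrict_univ]
    simp only [Finset.univ_eq_empty, Finset.prod_empty, Finset.sum_empty, sub_zero, one_pow,
      mul_one, add_zero, integral_const, smul_eq_mul]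
    rw [div_self (Nat.cast_ne_zero.mpr (Nat.factorial_ne_zero α₀))]
    simp [volume_pi, Measure.pi_univ, measureReal_def]
  | succ m ih =>
    classical
    set S1 : Set (Fin (m+1) → ℝ) := {y | (∀ j, 0 ≤ y j) ∧ ∑ j, y j ≤ 1} with hS1
    set f : (Fin (m+1) → ℝ) → ℝ := fun y => (1 - ∑ j, y j) ^ α₀ * ∏ j, (y j) ^ (α j) with hf
    set e := MeasurableEquiv.piFinSuccAbove (fun _ : Fin (m+1) => ℝ) 0 with he
    have hmp : MeasurePreserving e.symm ((volume : Measure ℝ).prod (volume : Measure (Fin m → ℝ)))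
        (volume : Measure (Fin (m+1) → ℝ)) := by
      have h := ((measurePreserving_piFinSuccAbove (fun _ : Fin (m+1) => (volume : Measure ℝ)) 0).symm e)
      rw [← volume_pi, ← volume_pi] at h
      exact h
    have step1 : (∫ y in S1, f y) =
        ∫ p in e.symm ⁻¹' S1, f (e.symm p)
          ∂((volume : Measure ℝ).prod (volume : Measure (Fin m → ℝ))) :=
      (hmp.setIntegral_preimage_emb e.symm.measurableEmbedding f S1).symm
    set T : Set (ℝ × (Fin m → ℝ)) :=
      {p | 0 ≤ p.1 ∧ (∀ j, 0 ≤ p.2 j) ∧ p.1 + ∑ j, p.2 j ≤ 1} with hTdef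
    have hesymm : ∀ p : ℝ × (Fin m → ℝ), e.symm p = Fin.cons p.1 p.2 := by
      intro p
      simp [he, MeasurableEquiv.piFinSuccAbove_symm_apply, Fin.insertNthEquiv,
        Fin.insertNth_zero']
    have hT : e.symm ⁻¹' S1 = T := by
      ext ⟨t, z⟩
      simp only [Set.mem_preimage, hesymm, hS1, Set.mem_setOf_eq, hTdef]
      rw [Fin.sum_univ_succ, Fin.forall_fin_succ]
      simp only [Fin.cons_zero, Fin.cons_succ]
      tauto
    set β : Fin m → ℕ := fun j => α (Fin.succ j) with hβ
    set g : ℝ × (Fin m → ℝ) → ℝ := fun p =>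
      (1 - (p.1 + ∑ j, p.2 j)) ^ α₀ * (p.1 ^ (α 0) * ∏ j, (p.2 j) ^ (β j)) with hg
    have hfg : ∀ p : ℝ × (Fin m → ℝ), f (e.symm p) = g p := by
      intro p
      simp only [hf, hesymm, hg]
      rw [Fin.sum_univ_succ, Fin.prod_univ_succ]
      simp [Fin.cons_zero, Fin.cons_succ, hβ]
    have hTclosed : IsClosed T := by
      have h1 : IsClosed {p : ℝ × (Fin m → ℝ) | 0 ≤ p.1} :=
        isClosed_le continuous_const continuous_fst
      have h2 : IsClosed {p : ℝ × (Fin m → ℝ) | ∀ j, 0 ≤ p.2 j} := by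
        have : {p : ℝ × (Fin m → ℝ) | ∀ j, 0 ≤ p.2 j} = ⋂ j, {p | 0 ≤ p.2 j} := by ext p; simp
        rw [this]
        exact isClosed_iInter fun j =>
          isClosed_le continuous_const ((continuous_apply j).comp continuous_snd)
      have h3 : IsClosed {p : ℝ × (Fin m → ℝ) | p.1 + ∑ j, p.2 j ≤ 1} :=
        isClosed_le (by fun_prop) continuous_const
      have : T = {p : ℝ × (Fin m → ℝ) | 0 ≤ p.1} ∩ ({p | ∀ j, 0 ≤ p.2 j} ∩
          {p | p.1 + ∑ j, p.2 j ≤ 1}) := by ext p; simp [hTdef, and_assoc]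
      rw [this]
      exact h1.inter (h2.inter h3)
    have hTmeas : MeasurableSet T := hTclosed.measurableSet
    have hTcompact : IsCompact T := by
      refine IsCompact.of_isClosed_subset
        (isCompact_Icc (a := ((0:ℝ), (0 : Fin m → ℝ))) (b := (1, 1))) hTclosed ?_
      rintro ⟨t, z⟩ ⟨ht, h0, hs⟩
      have hs' : t + ∑ j, z j ≤ 1 := hs
      have hzsum : (0:ℝ) ≤ ∑ j, z j := Finset.sum_nonneg fun j _ => h0 j
      refine ⟨⟨ht, fun j => h0 j⟩, ⟨show t ≤ 1 by linarith, fun j => ?_⟩⟩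
      have : z j ≤ ∑ i, z i := Finset.single_le_sum (fun i _ => h0 i) (mem_univ j)
      show z j ≤ 1
      linarith
    have hgcont : Continuous g := by fun_prop
    have hgint : IntegrableOn g T ((volume : Measure ℝ).prod (volume : Measure (Fin m → ℝ))) := by
      rw [← Measure.volume_eq_prod]
      exact hgcont.continuousOn.integrableOn_compact hTcompact
    have step2 : (∫ p in e.symm ⁻¹' S1, f (e.symm p)
          ∂((volume : Measure ℝ).prod (volume : Measure (Fin m → ℝ)))) =
        ∫ p in T, g p ∂((volume : Measure ℝ).prod (volume : Measure (Fin m → ℝ))) := by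
      rw [hT]
      exact setIntegral_congr_fun hTmeas (fun p _ => hfg p)
    have hAmeas : ∀ c : ℝ, MeasurableSet {z : Fin m → ℝ | (∀ j, 0 ≤ z j) ∧ ∑ j, z j ≤ c} := by
      intro c
      have h1 : IsClosed {z : Fin m → ℝ | ∀ j, 0 ≤ z j} := by
        have : {z : Fin m → ℝ | ∀ j, 0 ≤ z j} = ⋂ j, {z | 0 ≤ z j} := by ext z; simp
        rw [this]
        exact isClosed_iInter fun j => isClosed_le continuous_const (continuous_apply j)
      exact (h1.inter (isClosed_le
        (continuous_finset_sum _ fun j _ => continuous_apply j) continuous_const)).measurableSet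
    have hindint : Integrable (T.indicator g)
        ((volume : Measure ℝ).prod (volume : Measure (Fin m → ℝ))) :=
      (integrable_indicator_iff hTmeas).mpr hgint
    have step3 : (∫ p in T, g p ∂((volume : Measure ℝ).prod (volume : Measure (Fin m → ℝ)))) =
        ∫ t : ℝ, ∫ z : Fin m → ℝ, T.indicator g (t, z) := by
      rw [← integral_indicator hTmeas, MeasureTheory.integral_prod _ hindint]
    have hinner : ∀ t : ℝ, (∫ z : Fin m → ℝ, T.indicator g (t, z)) =
        Set.indicator (Set.Icc (0:ℝ) 1) (fun t => t ^ (α 0) *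
          ∫ z in {z : Fin m → ℝ | (∀ j, 0 ≤ z j) ∧ ∑ j, z j ≤ 1 - t},
            ((1 - t) - ∑ j, z j) ^ α₀ * ∏ j, (z j) ^ (β j)) t := by
      intro t
      by_cases ht : t ∈ Set.Icc (0:ℝ) 1
      · rw [Set.indicator_of_mem ht]
        have hz : ∀ z : Fin m → ℝ, T.indicator g (t, z) =
            Set.indicator {z : Fin m → ℝ | (∀ j, 0 ≤ z j) ∧ ∑ j, z j ≤ 1 - t}
              (fun z => t ^ (α 0) * (((1 - t) - ∑ j, z j) ^ α₀ * ∏ j, (z j) ^ (β j))) z := by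
          intro z
          rw [Set.indicator, Set.indicator]
          by_cases hzA : z ∈ {z : Fin m → ℝ | (∀ j, 0 ≤ z j) ∧ ∑ j, z j ≤ 1 - t}
          · rw [if_pos hzA, if_pos (show (t, z) ∈ T from ⟨ht.1, hzA.1, by
              have := hzA.2; simp only [Set.mem_setOf_eq]; linarith⟩)]
            simp only [hg]
            ring
          · rw [if_neg hzA, if_neg (by
              rintro ⟨ht0, h0, hs⟩
              exact hzA ⟨h0, by
                have : t + ∑ j, z j ≤ 1 := hs
                linarith⟩)]
        rw [MeasureTheory.integral_congr_ae (Filter.Eventually.of_forall hz),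
          integral_indicator (hAmeas (1 - t)), MeasureTheory.integral_const_mul]
      · rw [Set.indicator_of_notMem ht]
        have hz : ∀ z : Fin m → ℝ, T.indicator g (t, z) = 0 := by
          intro z
          apply Set.indicator_of_notMem
          rintro ⟨ht0, h0, hs⟩
          have hzsum : (0:ℝ) ≤ ∑ j, z j := Finset.sum_nonneg fun j _ => h0 j
          have : t + ∑ j, z j ≤ 1 := hs
          exact ht ⟨ht0, by linarith⟩
        simp only [hz, integral_zero]
    have step4 : (∫ t : ℝ, ∫ z : Fin m → ℝ, T.indicator g (t, z)) =
        ∫ t in Set.Ioo (0:ℝ) 1, t ^ (α 0) *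
          ∫ z in {z : Fin m → ℝ | (∀ j, 0 ≤ z j) ∧ ∑ j, z j ≤ 1 - t},
            ((1 - t) - ∑ j, z j) ^ α₀ * ∏ j, (z j) ^ (β j) := by
      rw [MeasureTheory.integral_congr_ae (Filter.Eventually.of_forall hinner),
        integral_indicator measurableSet_Icc, integral_Icc_eq_integral_Ioo]
    set K : ℝ := ∫ y in {y : Fin m → ℝ | (∀ j, 0 ≤ y j) ∧ ∑ j, y j ≤ 1},
        (1 - ∑ j, y j) ^ α₀ * ∏ j, (y j) ^ (β j) with hK
    have step5 : (∫ t in Set.Ioo (0:ℝ) 1, t ^ (α 0) *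
        ∫ z in {z : Fin m → ℝ | (∀ j, 0 ≤ z j) ∧ ∑ j, z j ≤ 1 - t},
          ((1 - t) - ∑ j, z j) ^ α₀ * ∏ j, (z j) ^ (β j)) =
        ∫ t in Set.Ioo (0:ℝ) 1,
          (t ^ (α 0) * (1 - t) ^ (α₀ + (∑ j, β j) + m)) * K := by
      refine setIntegral_congr_fun measurableSet_Ioo (fun t htm => ?_)
      rw [scaled_simplex_integral m α₀ β (show (0:ℝ) < 1 - t by
        have := htm.2; linarith)]
      ring
    have step6 : (∫ t in Set.Ioo (0:ℝ) 1,
        (t ^ (α 0) * (1 - t) ^ (α₀ + (∑ j, β j) + m)) * K) =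
        ((α 0).factorial * (α₀ + (∑ j, β j) + m).factorial /
          ((α 0) + (α₀ + (∑ j, β j) + m) + 1).factorial) * K := by
      rw [MeasureTheory.integral_mul_const, ← integral_Ioc_eq_integral_Ioo,
        ← intervalIntegral.integral_of_le zero_le_one, beta_nat]
    rw [step1, step2, step3, step4, step5, step6, hK, ih α₀ β]
    have hsum : α₀ + (∑ j, α j) + (m + 1) = (α 0) + (α₀ + (∑ j, β j) + m) + 1 := by
      rw [Fin.sum_univ_succ]
      simp only [hβ]
      omega
    have hprod : (∏ j : Fin (m+1), ((α j).factorial : ℝ)) =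
        ((α 0).factorial : ℝ) * ∏ j : Fin m, ((β j).factorial : ℝ) := by
      rw [Fin.prod_univ_succ]
    rw [hsum, hprod]
    have h1 : ((α₀ + (∑ j, β j) + m).factorial : ℝ) ≠ 0 :=
      Nat.cast_ne_zero.mpr (Nat.factorial_ne_zero _)
    have h2 : (((α 0) + (α₀ + (∑ j, β j) + m) + 1).factorial : ℝ) ≠ 0 :=
      Nat.cast_ne_zero.mpr (Nat.factorial_ne_zero _)
    field_simp
end

section
/- For holomorphic germs f(q,y) and g(x,p) (independent of ξ) with one degree of freedom, the Borel dual product admits the Hadamard-type contour integral representation: (f * g)(ξ,q,p) = (1/(2πi))∮_{|x|=r} f(q, p + ξ/x)·g(q + x, p)·dx/x, valid for ξ, q, p small and suitable r > 0. -/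
open intervalIntegral Metric

/-! Expand `f (q, p + ξ / x) = ∑ aₖ ξᵏ x⁻ᵏ` in its Taylor series in the second variable. On the
circle `‖x‖ = r` the Cauchy estimates `‖aₖ‖ ≤ C / ρᵏ` dominate the terms by a geometric series of
ratio `‖ξ‖ / (r ρ) < 1`, so the series can be integrated termwise against `g (q + x, p) dx / x`,
and Cauchy's formula for derivatives turns the `k`-th integral into `2πi aₖ ∂_qᵏ g (q, p) / k!`. -/

section

open Complex Real

variable {E : Type*} [NormedAddCommGroup E] [NormedSpace ℂ E]

theorem hasSum_circleIntegral_of_dominated {ι : Type*} [Countable ι] {F : ι → ℂ → E} {G : ℂ → E}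
    {c : ℂ} {R : ℝ} {u : ι → ℝ}
    (hF : ∀ i, CircleIntegrable (F i) c R) (h_bound : ∀ i, ∀ z ∈ sphere c |R|, ‖F i z‖ ≤ u i)
    (hu : Summable u) (h_lim : ∀ z ∈ sphere c |R|, HasSum (fun i => F i z) (G z)) :
    HasSum (fun i => ∮ z in C(c, R), F i z) (∮ z in C(c, R), G z) := by
  refine intervalIntegral.hasSum_integral_of_dominated_convergence (fun i _ => |R| * u i)
    (fun i => (hF i).out.def'.aestronglyMeasurable) (fun i => ?_)
    (.of_forall fun _ _ => hu.mul_left |R|) intervalIntegrable_const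
    (.of_forall fun θ _ => (h_lim _ (circleMap_mem_sphere' c R θ)).const_smul _)
  refine .of_forall fun θ _ => ?_
  rw [norm_smul, deriv_circleMap, norm_mul, norm_circleMap_zero, norm_I, mul_one]
  exact mul_le_mul_of_nonneg_left (h_bound i _ (circleMap_mem_sphere' c R θ)) (abs_nonneg R)

theorem circleIntegral_sub_center_inv_smul_eq_integral (φ : ℂ → E) (c : ℂ) {r : ℝ} (hr : r ≠ 0) :
    (∮ z in C(c, r), (z - c)⁻¹ • φ z) = ∫ θ in (0 : ℝ)..2 * π, I • φ (c + r * exp (I * θ)) := by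
  refine intervalIntegral.integral_congr fun θ _ => ?_
  have : circleMap 0 r θ ≠ 0 := circleMap_ne_center hr
  simp only [deriv_circleMap, circleMap_sub_center, smul_smul, mul_right_comm _ I,
    mul_inv_cancel₀ this, one_mul]
  rw [circleMap, mul_comm I]

theorem exists_norm_iteratedDeriv_div_factorial_le {F : ℂ → ℂ} {p : ℂ} {ρ : ℝ} (hρ : 0 < ρ)
    (hF : DifferentiableOn ℂ F (closedBall p ρ)) :
    ∃ C, ∀ k : ℕ, ‖iteratedDeriv k F p / k.factorial‖ ≤ C / ρ ^ k := by
  obtain ⟨C, hC⟩ := (isCompact_sphere p ρ).exists_bound_of_continuousOn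
    (hF.continuousOn.mono sphere_subset_closedBall)
  refine ⟨C, fun k => ?_⟩
  have hk : (0 : ℝ) < k.factorial := mod_cast k.factorial_pos
  rw [norm_div, Complex.norm_natCast, div_le_iff₀ hk, div_mul_eq_mul_div, mul_comm C]
  exact norm_iteratedDeriv_le_of_forall_mem_sphere_norm_le k hρ
    ((hF.mono closure_ball_subset_closedBall).diffContOnCl) hC

theorem hasSum_taylorSeries_div_pow_smul {F : ℂ → ℂ} {p : ℂ} {ρ : ℝ}
    (hF : DifferentiableOn ℂ F (ball p ρ)) {x ξ : ℂ} (hξ : ‖ξ‖ < ‖x‖ * ρ) (w : ℂ) :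
    HasSum (fun k : ℕ => (iteratedDeriv k F p / k.factorial * ξ ^ k) • ((1 / x ^ (k + 1)) • w))
      (x⁻¹ • (F (p + ξ / x) * w)) := by
  have hx : x ≠ 0 := by
    rintro rfl
    simp only [norm_zero, zero_mul] at hξ
    exact (norm_nonneg ξ).not_gt hξ
  have hw : p + ξ / x ∈ ball p ρ := by
    rwa [mem_ball, dist_eq_norm, add_sub_cancel_left, norm_div,
      div_lt_iff₀ (norm_pos_iff.2 hx), mul_comm]
  have key := (Complex.hasSum_taylorSeries_on_ball hF hw).mul_right (x⁻¹ * w)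
  rw [smul_eq_mul, mul_left_comm]
  refine (congrArg (HasSum · _) (funext fun k => ?_)).mp key
  simp only [add_sub_cancel_left, smul_eq_mul, div_pow]
  field_simp
  ring

theorem hasSum_hadamard_circleIntegral {F G : ℂ → ℂ} {p q ξ : ℂ} {r ρ : ℝ} (hr : 0 < r)
    (hF : DifferentiableOn ℂ F (closedBall p ρ)) (hG : DifferentiableOn ℂ G (closedBall q r))
    (hξ : ‖ξ‖ < r * ρ) :
    HasSum (fun k : ℕ => iteratedDeriv k F p / k.factorial * (iteratedDeriv k G q / k.factorial)
        * ξ ^ k)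
      ((2 * π * I)⁻¹ • ∮ z in C(q, r), (z - q)⁻¹ • (F (p + ξ / (z - q)) * G z)) := by
  set a : ℕ → ℂ := fun k => iteratedDeriv k F p / k.factorial
  have hρ : 0 < ρ := pos_of_mul_pos_right ((norm_nonneg ξ).trans_lt hξ) hr.le
  obtain ⟨C, hC⟩ := exists_norm_iteratedDeriv_div_factorial_le hρ hF
  obtain ⟨M, hM⟩ := (isCompact_sphere q r).exists_bound_of_continuousOn
    (hG.continuousOn.mono sphere_subset_closedBall)
  have h_terms :
      HasSum (fun k : ℕ => ∮ z in C(q, r), (a k * ξ ^ k) • ((1 / (z - q) ^ (k + 1)) • G z))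
      (∮ z in C(q, r), (z - q)⁻¹ • (F (p + ξ / (z - q)) * G z)) := by
    refine hasSum_circleIntegral_of_dominated (u := fun k => C * M / r * (‖ξ‖ / (r * ρ)) ^ k)
      (fun k => ?_) (fun k z hz => ?_) ?_ (fun z hz => ?_)
    · have hGc := hG.continuousOn.mono sphere_subset_closedBall
      have hne : ∀ z ∈ sphere q r, (z - q) ^ (k + 1) ≠ 0 := fun z hz =>
        pow_ne_zero _ (sub_ne_zero.2 (ne_of_mem_sphere hz hr.ne'))
      exact ContinuousOn.circleIntegrable hr.le (by fun_prop (disch := assumption))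
    · rw [abs_of_pos hr] at hz
      have hzq : ‖z - q‖ = r := mem_sphere_iff_norm.1 hz
      calc ‖(a k * ξ ^ k) • (1 / (z - q) ^ (k + 1)) • G z‖
          = ‖a k‖ * ‖ξ‖ ^ k / r ^ (k + 1) * ‖G z‖ := by
            simp only [norm_smul, norm_mul, norm_pow, norm_div, norm_one, hzq]; ring
        _ ≤ C / ρ ^ k * ‖ξ‖ ^ k / r ^ (k + 1) * M := by
            have hC0 : 0 ≤ C := by simpa using (norm_nonneg _).trans (hC 0)
            gcongr
            exacts [hC k, hM z hz]
        _ = C * M / r * (‖ξ‖ / (r * ρ)) ^ k := by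
            rw [div_pow, mul_pow, pow_succ]
            field_simp
    · exact (summable_geometric_of_lt_one (by positivity)
        ((div_lt_one (mul_pos hr hρ)).2 hξ)).mul_left _
    · rw [abs_of_pos hr] at hz
      exact hasSum_taylorSeries_div_pow_smul (hF.mono ball_subset_closedBall)
        (by rwa [mem_sphere_iff_norm.1 hz]) (G z)
  convert h_terms.const_smul (2 * π * I)⁻¹ using 1
  funext k
  rw [circleIntegral.integral_smul,
    DifferentiableOn.circleIntegral_one_div_sub_center_pow_smul hr k hG]
  simp only [a, smul_eq_mul]
  field_simp [two_pi_I_ne_zero]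

end

/-- Hadamard-type contour integral representation of the Borel
dual product of `ξ`-independent germs: for `f`, `g` holomorphic on a polydisc,
for `ξ, q, p` small and suitable `r > 0`,
`(f * g)(ξ,q,p) = Σ_k (1/k!)∂_p^k f·(1/k!)∂_q^k g·ξ^k
  = (1/(2πi)) ∮_{|x|=r} f(q, p + ξ/x) g(q + x, p) dx/x`. -/
theorem bstar_hadamard_contour (f g : ℂ → ℂ → ℂ) (R : ℝ) (hR : 0 < R)
    (hf : DifferentiableOn ℂ (fun z : ℂ × ℂ => f z.1 z.2) (ball (0 : ℂ) R ×ˢ ball (0 : ℂ) R))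
    (hg : DifferentiableOn ℂ (fun z : ℂ × ℂ => g z.1 z.2) (ball (0 : ℂ) R ×ˢ ball (0 : ℂ) R)) :
    ∃ δ : ℝ, 0 < δ ∧ ∀ (ξ q p : ℂ) (r : ℝ), 0 < r → r < δ → ‖ξ‖ < r * δ →
      ‖q‖ < δ → ‖p‖ < δ →
      (∑' k : ℕ,
          (iteratedDeriv k (f q) p / (k.factorial : ℂ)) *
            (iteratedDeriv k (fun x => g x p) q / (k.factorial : ℂ)) * ξ ^ k) =
        (1 / (2 * Real.pi * Complex.I)) *
          ∫ θ in (0 : ℝ)..(2 * Real.pi),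
            f q (p + ξ / ((r : ℂ) * Complex.exp (Complex.I * (θ : ℂ)))) *
              g (q + (r : ℂ) * Complex.exp (Complex.I * (θ : ℂ))) p * Complex.I := by
  refine ⟨R / 2, half_pos hR, fun ξ q p r hr hrδ hξ hq hp => ?_⟩
  have hp_ball : closedBall p (R / 2) ⊆ ball 0 R :=
    closedBall_subset_ball' (by rw [dist_zero_right]; linarith)
  have hq_ball : closedBall q r ⊆ ball 0 R :=
    closedBall_subset_ball' (by rw [dist_zero_right]; linarith)
  have hF : DifferentiableOn ℂ (f q) (closedBall p (R / 2)) :=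
    hf.comp ((differentiableOn_const q).prodMk differentiableOn_id)
      fun y hy => ⟨hq_ball (mem_closedBall_self hr.le), hp_ball hy⟩
  have hG : DifferentiableOn ℂ (fun x => g x p) (closedBall q r) :=
    hg.comp (differentiableOn_id.prodMk (differentiableOn_const p))
      fun x hx => ⟨hq_ball hx, hp_ball (mem_closedBall_self (half_pos hR).le)⟩
  rw [(hasSum_hadamard_circleIntegral hr hF hG hξ).tsum_eq,
    circleIntegral_sub_center_inv_smul_eq_integral _ _ hr.ne', one_div]
  congr 1
  refine intervalIntegral.integral_congr fun θ _ => ?_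
  simp only [add_sub_cancel_left, smul_eq_mul]
  ring
end

section
/- Hypergeometric star-product identity: for complex exponents α, β, in the Borel dual algebra one has (1+p)^α * (1+q)^β = (1+p)^α (1+q)^β · F(−α, −β, 1; ξ/((1+p)(1+q))), where F(a,b,1;z) = Σ_{k≥0} ((a)_k (b)_k/(k!)²) z^k is the Gauss hypergeometric series; equivalently, the identity of formal power series Σ_k C(α,k)C(β,k)(1+p)^{α−k}(1+q)^{β−k} ξ^k holds. -/
/-!
The coefficient of `q^i p^j ξ^k` in `(1+p)^α * (1+q)^β` factors into a `p`-part and a `q`-part,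
and each part is turned into the right-hand side by the trinomial revision identity
`C(j+k, k) C(α, j+k) = C(α, k) C(α-k, j)`, valid for generalized binomial coefficients
since they are Mathlib's `Ring.choose` on the binomial ring `ℂ`.
-/

open Finset

/-- Generalized binomial coefficient `C(α,k) = α(α−1)⋯(α−k+1)/k!`. -/
noncomputable def gbinom (α : ℂ) (k : ℕ) : ℂ :=
  (∏ i ∈ range k, (α - (i : ℂ))) / (k.factorial : ℂ)

/-- The Borel dual product of two `ξ`-independent power series `f = Σ_j F_j p^j`
and `g = Σ_i G_i q^i`: the coefficient of `q^i p^j ξ^k` in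
`f * g = Σ_k (1/k!)∂_p^k f·(1/k!)∂_q^k g·ξ^k`. -/
noncomputable def bstar0 (F G : ℕ → ℂ) : ℕ → ℕ → ℕ → ℂ := fun i j k =>
  ((j + k).choose k : ℂ) * F (j + k) * ((i + k).choose k : ℂ) * G (i + k)

theorem gbinom_eq_ringChoose (α : ℂ) (k : ℕ) : gbinom α k = Ring.choose α k := by
  rw [Ring.choose_eq_smul, gbinom, ← descPochhammer_eval_eq_prod_range, smul_eq_mul,
    div_eq_inv_mul, ← Polynomial.aeval_eq_smeval, ← Polynomial.eval_map_algebraMap,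
    descPochhammer_map]

theorem choose_add_mul_gbinom_add (α : ℂ) (j k : ℕ) :
    ((j + k).choose k : ℂ) * gbinom α (j + k) = gbinom α k * gbinom (α - k) j := by
  simp only [gbinom_eq_ringChoose]
  rw [← nsmul_eq_mul, Ring.choose_smul_choose α (Nat.le_add_left k j), Nat.add_sub_cancel]

/-- hypergeometric star-product identity
`(1+p)^α * (1+q)^β = (1+p)^α (1+q)^β F(−α,−β,1; ξ/((1+p)(1+q)))
  = Σ_k C(α,k)C(β,k)(1+p)^{α−k}(1+q)^{β−k} ξ^k`,
stated as an identity of the coefficients of `q^i p^j ξ^k`. -/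
theorem hypergeometric_star_identity (α β : ℂ) :
    bstar0 (gbinom α) (gbinom β) = fun i j k =>
      gbinom α k * gbinom β k * gbinom (α - (k : ℂ)) j * gbinom (β - (k : ℂ)) i := by
  funext i j k
  rw [bstar0, mul_assoc (_ * _), choose_add_mul_gbinom_add, choose_add_mul_gbinom_add]
  ring
end

section
/- If A and B are finite subsets of ℂ, then the sum map (x,y) ↦ x + y restricts to a locally trivial (smooth) fibration from {(x,y) ∈ (ℂ∖A)×(ℂ∖B) : x+y ∈ ℂ∖(A ∪ B ∪ (A+B))} onto ℂ∖(A ∪ B ∪ (A+B)), where A+B = {a+b : a ∈ A, b ∈ B}. -/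
/-!
Let `χ` be a Lipschitz cutoff equal to `0` on `A` and to `1` near `ξ₀ - B`. For `ξ` close to `ξ₀`
the map `h_ξ x = x + (ξ₀ - ξ) χ x` is the identity plus a uniform contraction, hence a
homeomorphism of `ℂ` whose inverse (a Banach fixed point) depends continuously on `ξ`.
It fixes `A` and sends `ξ - b` to `ξ₀ - b`, so it carries the fibre `ℂ ∖ (A ∪ (ξ - B))` onto
`ℂ ∖ (A ∪ (ξ₀ - B))`; in the coordinates `(x + y, x)` the maps `h_ξ` trivialize the sum map.
-/

open Pointwise Metric Function Set Filter Topology NNReal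

section ContractingFamily

variable {P X : Type*} [TopologicalSpace P] [MetricSpace X] [Nonempty X] [CompleteSpace X]
  {K : ℝ≥0} {f : P → X → X}

theorem ContractingWith.continuous_fixedPoint (hf : ∀ p, ContractingWith K (f p))
    (hcont : Continuous (uncurry f)) :
    Continuous fun p => ContractingWith.fixedPoint (f p) (hf p) := by
  refine continuous_iff_continuousAt.2 fun p₀ => ?_
  set y := ContractingWith.fixedPoint (f p₀) (hf p₀)
  have hfy : Tendsto (fun p => f p y) (𝓝 p₀) (𝓝 y) := by
    have := (hcont.comp (continuous_id.prodMk (continuous_const (y := y)))).tendsto p₀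
    rwa [comp_apply, id, uncurry_apply_pair, (hf p₀).fixedPoint_isFixedPt] at this
  have hy : Tendsto (fun p => dist y (f p y) / (1 - K)) (𝓝 p₀) (𝓝 0) := by
    simpa using (tendsto_const_nhds (x := y)).dist hfy |>.div_const (1 - (K : ℝ))
  refine tendsto_iff_dist_tendsto_zero.2 (squeeze_zero (fun _ => dist_nonneg) (fun p => ?_) hy)
  rw [dist_comm]
  exact (hf p).dist_fixedPoint_le y

end ContractingFamily

theorem ContractingWith.const_sub {E : Type*} [NormedAddCommGroup E] {K : ℝ≥0} {g : E → E}
    (hg : ContractingWith K g) (u : E) : ContractingWith K fun x => u - g x :=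
  ⟨hg.1, LipschitzWith.of_dist_le_mul fun x y => by
    rw [dist_sub_left]; exact hg.2.dist_le_mul x y⟩

section PerturbationOfIdentity

variable {P E : Type*} [TopologicalSpace P] [NormedAddCommGroup E] [CompleteSpace E]
  {K : ℝ≥0} {φ : P → E → E}

noncomputable def Homeomorph.prodAddOfContractingWith (hφ : ∀ p, ContractingWith K (φ p))
    (hcont : Continuous (uncurry φ)) : P × E ≃ₜ P × E where
  toFun q := (q.1, q.2 + φ q.1 q.2)
  invFun q := (q.1, ContractingWith.fixedPoint _ ((hφ q.1).const_sub q.2))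
  left_inv q := Prod.ext rfl
    (((hφ q.1).const_sub _).fixedPoint_unique (add_sub_cancel_right q.2 (φ q.1 q.2))).symm
  right_inv q := Prod.ext rfl
    (eq_sub_iff_add_eq.mp (((hφ q.1).const_sub q.2).fixedPoint_isFixedPt).eq.symm)
  continuous_toFun := continuous_fst.prodMk (continuous_snd.add hcont)
  continuous_invFun := continuous_fst.prodMk <|
    ContractingWith.continuous_fixedPoint (f := fun q : P × E => fun x => q.2 - φ q.1 x)
      (fun q => (hφ q.1).const_sub q.2) (by fun_prop)

end PerturbationOfIdentity

def Homeomorph.subtypeSndEquivProd {X Y : Type*} [TopologicalSpace X] [TopologicalSpace Y]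
    (t : Y → Prop) : {q : X × Y // t q.2} ≃ₜ X × {y // t y} where
  toFun q := (q.1.1, ⟨q.1.2, q.2⟩)
  invFun q := ⟨(q.1, q.2), q.2.2⟩
  left_inv _ := rfl
  right_inv _ := rfl
  continuous_toFun := by fun_prop
  continuous_invFun := by fun_prop

def Homeomorph.sumMapTotalSpace {G : Type*} [AddCommGroup G] [TopologicalSpace G]
    [IsTopologicalAddGroup G] (A B U : Set G) :
    {z : G × G // z.1 ∉ A ∧ z.2 ∉ B ∧ z.1 + z.2 ∈ U} ≃ₜ
      {q : U × G // q.2 ∉ A ∧ (q.1 : G) - q.2 ∉ B} where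
  toFun z := ⟨(⟨z.1.1 + z.1.2, z.2.2.2⟩, z.1.1), z.2.1, by simpa using z.2.2.1⟩
  invFun q := ⟨(q.1.2, q.1.1 - q.1.2), q.2.1, q.2.2, by simp⟩
  left_inv z := by ext <;> simp
  right_inv q := by ext <;> simp
  continuous_toFun := by fun_prop
  continuous_invFun := by fun_prop

theorem exists_lipschitzWith_eqOn_zero_eqOn_one_thickening {X : Type*} [PseudoMetricSpace X]
    {s t : Set X} (hst : Disjoint s t) (hs : IsCompact s) (ht : IsClosed t) :
    ∃ δ > 0, ∃ χ : X → ℝ, LipschitzWith (Real.toNNReal δ)⁻¹ χ ∧ EqOn χ 0 s ∧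
      EqOn χ 1 (thickening δ t) := by
  obtain ⟨δ₀, hδ₀, hdisj⟩ := hst.exists_thickenings hs ht
  have hδ : 0 < δ₀ / 2 := half_pos hδ₀
  refine ⟨δ₀ / 2, hδ, fun x => thickenedIndicator hδ (thickening (δ₀ / 2) t) x,
    fun x y => lipschitzWith_thickenedIndicator hδ _ x y, fun x hx => ?_, fun x hx => ?_⟩
  · have hx' : x ∉ thickening (δ₀ / 2) (thickening (δ₀ / 2) t) := fun hx' =>
      hdisj.notMem_of_mem_left (self_subset_thickening hδ₀ s hx)
        (add_halves δ₀ ▸ thickening_thickening_subset _ _ _ hx')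
    simp [thickenedIndicator_zero hδ _ hx']
  · simp [thickenedIndicator_one_of_mem_closure hδ _ (subset_closure hx)]

theorem Function.Injective.apply_mem_iff_of_eqOn_id {α : Type*} {f : α → α} (hf : Injective f)
    {s : Set α} (h : EqOn f id s) (x : α) : f x ∈ s ↔ x ∈ s := by
  simpa only [h.image_eq_self] using hf.mem_set_image (s := s) (a := x)

theorem Function.Injective.sub_apply_mem_iff {G : Type*} [AddCommGroup G] {f : G → G}
    (hf : Injective f) {B : Set G} {ξ ξ₀ : G} (h : ∀ b ∈ B, f (ξ - b) = ξ₀ - b) (x : G) :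
    ξ₀ - f x ∈ B ↔ ξ - x ∈ B := by
  constructor
  · intro hx
    have : ξ - (ξ₀ - f x) = x := hf (by rw [h _ hx, sub_sub_cancel])
    rwa [← this, sub_sub_cancel]
  · intro hx
    have := h _ hx
    rw [sub_sub_cancel] at this
    rwa [this, sub_sub_cancel]

theorem exists_homeomorph_sum_fibres {A B : Set ℂ} (hA : IsCompact A) (hB : IsClosed B) {ξ₀ : ℂ}
    (hξ₀ : ξ₀ ∉ A + B) :
    ∃ r > 0, ∀ U ⊆ ball ξ₀ r, ∃ Ψ : U × ℂ ≃ₜ U × ℂ, (∀ q, (Ψ q).1 = q.1) ∧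
      ∀ q : U × ℂ, (q.2 ∉ A ∧ (q.1 : ℂ) - q.2 ∉ B ↔ (Ψ q).2 ∉ A ∧ ξ₀ - (Ψ q).2 ∉ B) := by
  have hdisj : Disjoint A ((ξ₀ - ·) ⁻¹' B) :=
    disjoint_left.2 fun a ha hb => hξ₀ ⟨a, ha, ξ₀ - a, hb, add_sub_cancel a ξ₀⟩
  obtain ⟨δ, hδ, χ, hχ, hχA, hχB⟩ := exists_lipschitzWith_eqOn_zero_eqOn_one_thickening hdisj hA
    (hB.preimage (continuous_const.sub continuous_id))
  refine ⟨δ / 2, half_pos hδ, fun U hU => ?_⟩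
  have hcontr : ∀ ξ : U, ContractingWith (1 / 2) fun x => (ξ₀ - ξ) * (χ x : ℂ) := by
    intro ξ
    refine ⟨by norm_num, ((lipschitzWith_smul (ξ₀ - ξ)).comp
      (Complex.isometry_ofReal.lipschitz.comp hχ)).weaken ?_⟩
    have hξ : ‖ξ₀ - ξ‖ < δ / 2 := by rw [← dist_eq_norm, dist_comm]; exact hU ξ.2
    rw [← NNReal.coe_le_coe]
    push_cast
    rw [Real.coe_toNNReal _ hδ.le, one_mul]
    calc ‖ξ₀ - ξ‖ * δ⁻¹ ≤ δ / 2 * δ⁻¹ := by gcongr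
      _ = 1 / 2 := by field_simp
  have hcont : Continuous (uncurry fun (ξ : U) x => (ξ₀ - ξ) * (χ x : ℂ)) := by
    have := hχ.continuous
    fun_prop
  set Ψ := Homeomorph.prodAddOfContractingWith hcontr hcont
  refine ⟨Ψ, fun _ => rfl, fun ⟨ξ, x⟩ => ?_⟩
  have hinj : Injective fun x => (Ψ (ξ, x)).2 := fun x y hxy =>
    congrArg Prod.snd (Ψ.injective (Prod.ext (rfl : ξ = ξ) hxy : Ψ (ξ, x) = Ψ (ξ, y)))
  have hfix : EqOn (fun x => (Ψ (ξ, x)).2) id A := fun a ha => by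
    simp [Ψ, Homeomorph.prodAddOfContractingWith, hχA ha]
  have hmove : ∀ b ∈ B, (Ψ (ξ, ξ - b)).2 = ξ₀ - b := fun b hb => by
    have hnear : ξ - b ∈ thickening δ ((ξ₀ - ·) ⁻¹' B) := mem_thickening_iff.2
      ⟨ξ₀ - b, by simpa using hb, by rw [dist_sub_right]; exact (hU ξ.2).trans (half_lt_self hδ)⟩
    simp [Ψ, Homeomorph.prodAddOfContractingWith, hχB hnear]
  exact and_congr (not_congr (hinj.apply_mem_iff_of_eqOn_id hfix x).symm)
    (not_congr (hinj.sub_apply_mem_iff hmove x).symm)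

/-- for finite `A, B ⊂ ℂ`, the sum map `(x,y) ↦ x+y` is a locally
trivial fibration from `{(x,y) : x ∉ A, y ∉ B, x+y ∉ A ∪ B ∪ (A+B)}` onto
`ℂ∖(A ∪ B ∪ (A+B))`: every base point `ξ₀` has an open neighbourhood `U` over
which the map is trivialized, with fibre `{x : x ∉ A, ξ₀ − x ∉ B}`. -/
theorem sum_map_locally_trivial (A B : Finset ℂ) :
    ∀ ξ₀ : ℂ, ξ₀ ∉ (A : Set ℂ) ∪ (B : Set ℂ) ∪ ((A : Set ℂ) + (B : Set ℂ)) →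
      ∃ U : Set ℂ, IsOpen U ∧ ξ₀ ∈ U ∧
        U ⊆ ((A : Set ℂ) ∪ (B : Set ℂ) ∪ ((A : Set ℂ) + (B : Set ℂ)))ᶜ ∧
        ∃ e : {z : ℂ × ℂ // z.1 ∉ (A : Set ℂ) ∧ z.2 ∉ (B : Set ℂ) ∧ z.1 + z.2 ∈ U} ≃ₜ
            U × {x : ℂ // x ∉ (A : Set ℂ) ∧ ξ₀ - x ∉ (B : Set ℂ)},
          ∀ z, ((e z).1 : ℂ) = z.1.1 + z.1.2 := by
  intro ξ₀ hξ₀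
  have hclosed : IsClosed ((A : Set ℂ) ∪ (B : Set ℂ) ∪ ((A : Set ℂ) + (B : Set ℂ))) :=
    ((A.finite_toSet.union B.finite_toSet).union (A.finite_toSet.add B.finite_toSet)).isClosed
  obtain ⟨r₁, hr₁, hball⟩ := isOpen_iff.mp hclosed.isOpen_compl ξ₀ hξ₀
  obtain ⟨r₂, hr₂, htriv⟩ := exists_homeomorph_sum_fibres A.finite_toSet.isCompact
    B.finite_toSet.isClosed fun h => hξ₀ (Or.inr h)
  obtain ⟨Ψ, hΨ, hfibre⟩ := htriv (ball ξ₀ (min r₁ r₂)) (ball_subset_ball (min_le_right _ _))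
  exact ⟨ball ξ₀ (min r₁ r₂), isOpen_ball, mem_ball_self (lt_min hr₁ hr₂),
    (ball_subset_ball (min_le_left _ _)).trans hball,
    ((Homeomorph.sumMapTotalSpace _ _ _).trans (Ψ.subtype hfibre)).trans
      (Homeomorph.subtypeSndEquivProd _), fun z => congrArg Subtype.val (hΨ _)⟩
end
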